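/- Let s = w₁₁ ⊗ x₂y₂ − w₂₁ ⊗ x₁y₂ − w₁₂ ⊗ x₂y₁ + w₂₂ ⊗ x₁y₁, an element of M_A^{1,1} (the Verma module M(1,1,−1,0)). Then ∇s = 8Θ ⊗ 1 in M_A^{0,0}. -/
import Mathlib


/- Setup: `Cl` is the Clifford algebra over `ℂ[Θ]` realizing `U(𝔤₍<₀₎)` for
`𝒜(K′₄)`, with `w11, w22, w12, w21` as in the paper.  On `Cl ⊗[ℂ] ℂ[x₁,x₂,y₁,y₂]`
(variables `X 0, X 1 = x₁, x₂` and `X 2, X 3 = y₁, y₂`) we define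
`∇(u ⊗ p) = u·w₁₁ ⊗ ∂ₓ₁∂ᵧ₁p + u·w₂₁ ⊗ ∂ₓ₂∂ᵧ₁p + u·w₁₂ ⊗ ∂ₓ₁∂ᵧ₂p + u·w₂₂ ⊗ ∂ₓ₂∂ᵧ₂p`,
and `MA m n = Cl ⊗ (bihomogeneous polynomials of degree m in x and n in y)` is the
finite Verma module `M(m,n,−(m+n)/2,(m−n)/2)` of quadrant A. -/

set_option synthInstance.maxHeartbeats 1000000
set_option maxHeartbeats 1000000

noncomputable section

open scoped TensorProduct

def Qf : QuadraticForm (Polynomial ℂ) (Fin 4 → Polynomial ℂ) :=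
  QuadraticMap.weightedSumSquares (Polynomial ℂ) (fun _ : Fin 4 => (Polynomial.X : Polynomial ℂ))

abbrev Cl : Type := CliffordAlgebra Qf

def η (i : Fin 4) : Cl := CliffordAlgebra.ι Qf (Pi.single i 1)

def ii : Cl := algebraMap ℂ Cl Complex.I

def w11 : Cl := η 1 + ii * η 0
def w22 : Cl := η 1 - ii * η 0
def w12 : Cl := -(η 3) + ii * η 2
def w21 : Cl := η 3 + ii * η 2

abbrev P4 : Type := MvPolynomial (Fin 4) ℂ

abbrev MCl : Type := Cl ⊗[ℂ] P4

instance : AddCommGroup MCl := inferInstance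
instance : Module ℂ MCl := inferInstance

def pd (i : Fin 4) : P4 →ₗ[ℂ] P4 := (MvPolynomial.pderiv i).toLinearMap

/-- `∇(u ⊗ p) = u·w₁₁ ⊗ ∂ₓ₁∂ᵧ₁p + u·w₂₁ ⊗ ∂ₓ₂∂ᵧ₁p + u·w₁₂ ⊗ ∂ₓ₁∂ᵧ₂p + u·w₂₂ ⊗ ∂ₓ₂∂ᵧ₂p` -/
def nabla : MCl →ₗ[ℂ] MCl :=
  TensorProduct.map (LinearMap.mulRight ℂ w11) (pd 0 ∘ₗ pd 2) +
  TensorProduct.map (LinearMap.mulRight ℂ w21) (pd 1 ∘ₗ pd 2) +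
  TensorProduct.map (LinearMap.mulRight ℂ w12) (pd 0 ∘ₗ pd 3) +
  TensorProduct.map (LinearMap.mulRight ℂ w22) (pd 1 ∘ₗ pd 3)

def Th : Cl := algebraMap (Polynomial ℂ) Cl Polynomial.X

/-- The element `s = (w₁₁ ⊗ x₂ − w₂₁ ⊗ x₁)y₂ − (w₁₂ ⊗ x₂ − w₂₂ ⊗ x₁)y₁
= w₁₁ ⊗ x₂y₂ − w₂₁ ⊗ x₁y₂ − w₁₂ ⊗ x₂y₁ + w₂₂ ⊗ x₁y₁` of
`M_A^{1,1} = M(1,1,−1,0)`. -/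
def sel : MCl :=
  w11 ⊗ₜ (MvPolynomial.X 1 * MvPolynomial.X 3) -
  w21 ⊗ₜ (MvPolynomial.X 0 * MvPolynomial.X 3) -
  w12 ⊗ₜ (MvPolynomial.X 1 * MvPolynomial.X 2) +
  w22 ⊗ₜ (MvPolynomial.X 0 * MvPolynomial.X 2)

lemma eta_sq (i : Fin 4) : η i * η i = Th := by
  rw [η, CliffordAlgebra.ι_sq_scalar, Th]
  congr 1
  simp [Qf, QuadraticMap.weightedSumSquares_apply, Pi.single_apply, Finset.sum_ite_eq']

lemma eta_anti {i j : Fin 4} (h : i ≠ j) : η i * η j = -(η j * η i) := by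
  have key := CliffordAlgebra.ι_mul_ι_add_swap (Q := Qf) (Pi.single i 1) (Pi.single j 1)
  have hp : QuadraticMap.polar Qf (Pi.single i 1) (Pi.single j 1) = 0 := by
    simp only [QuadraticMap.polar, Qf, QuadraticMap.weightedSumSquares_apply, Pi.add_apply,
      Pi.single_apply, smul_eq_mul]
    have key2 : ∀ x : Fin 4,
        Polynomial.X * (((if x = i then (1:Polynomial ℂ) else 0) + if x = j then 1 else 0) *
          ((if x = i then (1:Polynomial ℂ) else 0) + if x = j then 1 else 0)) =
        (if x = i then Polynomial.X else 0) + (if x = j then Polynomial.X else 0) := by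
      intro x
      split_ifs with h1 h2 <;> simp_all
    rw [Finset.sum_congr rfl fun x _ => key2 x]
    simp [Finset.sum_add_distrib, Finset.sum_ite_eq']
  rw [hp, map_zero] at key
  rw [η, η]
  exact eq_neg_of_add_eq_zero_left key

lemma ii_mul (x : Cl) : ii * x = Complex.I • x := by
  rw [ii, Algebra.smul_def]

lemma clifford_id : w11 * w22 - w21 * w12 - w12 * w21 + w22 * w11 = 8 * Th := by
  have h01 : η 0 * η 1 = -(η 1 * η 0) := eta_anti (by decide)
  have h23 : η 2 * η 3 = -(η 3 * η 2) := eta_anti (by decide)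
  have hII : (Complex.I * Complex.I : ℂ) = -1 := Complex.I_mul_I
  simp only [w11, w22, w12, w21, ii_mul, add_mul, mul_add, sub_mul, mul_sub, neg_mul, mul_neg,
    smul_mul_assoc, mul_smul_comm, smul_smul, eta_sq, h01, h23, hII, smul_neg, neg_neg, neg_smul,
    one_smul]
  have h8 : (8 : Cl) * Th = (8 : ℂ) • Th := by
    rw [Algebra.smul_def, map_ofNat]
  rw [h8]
  match_scalars <;> simp [Complex.I_sq] <;> ring

/-- `∇s = 8Θ ⊗ 1` in `M_A^{0,0}`. -/
theorem nabla_s_eq :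
    nabla sel = (8 * Th) ⊗ₜ (1 : P4) := by
  rw [← clifford_id]
  simp only [nabla, sel, LinearMap.add_apply, map_sub, map_add, TensorProduct.map_tmul,
    LinearMap.mulRight_apply, LinearMap.coe_comp, Function.comp_apply, pd,
    Derivation.coeFn_coe, MvPolynomial.pderiv_mul, MvPolynomial.pderiv_X, Pi.single_apply]
  simp only [Fin.isValue, Fin.reduceEq, reduceIte, map_zero, map_one, zero_mul, mul_zero,
    add_zero, zero_add, mul_one, one_mul]
  simp only [TensorProduct.tmul_add, Derivation.map_one_eq_zero, mul_zero,
    TensorProduct.tmul_zero, add_zero, zero_add,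
    TensorProduct.sub_tmul, TensorProduct.add_tmul, TensorProduct.tmul_sub]

end
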